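/- arXiv:2204.08827 — 2 statements merged into one kernel-verified Lean document; each statement's English description precedes it below -/
import Mathlib

section
/- Under Assumptions (B1)–(B3), there exist constants L1 > 0 and L2 > 0, depending only on Y(0), φ, ψ, the drift b (through c1, c2, p, y_*, γ), λ and T (in particular not on Z, Λ or N), such that for every noise path Z with Hölder constant Λ, the pathwise solution Y satisfies φ(t) + L1/(L2 + Λ)^{1/(γλ+λ−1)} ≤ Y(t) ≤ ψ(t) − L1/(L2 + Λ)^{1/(γλ+λ−1)} for all t ∈ [0,T]. -/
/-!
Let `h = Y - φ`, `B = K + Λ` and `x = L₁ / B^{1/(γλ+λ-1)}`. While `h ≤ 2x` the drift pushes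
`h` up at rate at least `A = c₂ / (2x)^γ`, whereas the noise and the Hölder boundary can pull
it down by at most `B τ^λ` over a time `τ`. The exponent of `x` is chosen so that
`B ≤ A^λ x^{1-λ}`, and then Young's inequality gives `B τ^λ ≤ A τ + x`: a stretch of time
spent below `2x` costs at most `x`. Since `h(0) ≥ 2x`, `h` never drops below `x`.
The upper bound is the same argument for `ψ - Y`.
-/

open MeasureTheory Set Filter Topology Real

theorem continuousOn_of_abs_sub_le_mul_rpow {f : ℝ → ℝ} {s : Set ℝ} {K lam : ℝ}
    (hlam : 0 < lam) (hf : ∀ x ∈ s, ∀ y ∈ s, |f y - f x| ≤ K * |y - x| ^ lam) :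
    ContinuousOn f s := by
  intro x hx
  have hlim : Tendsto (fun y => K * |y - x| ^ lam) (𝓝[s] x) (𝓝 0) := by
    have : ContinuousAt (fun y : ℝ => K * |y - x| ^ lam) x :=
      continuousAt_const.mul
        ((continuous_abs.comp (continuous_sub_right x)).continuousAt.rpow_const (Or.inr hlam.le))
    simpa [zero_rpow hlam.ne'] using this.tendsto.mono_left nhdsWithin_le_nhds
  refine tendsto_iff_dist_tendsto_zero.2
    (squeeze_zero' (Eventually.of_forall fun _ => dist_nonneg) ?_ hlim)
  filter_upwards [self_mem_nhdsWithin] with y hy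
  exact (Real.dist_eq _ _).trans_le (hf x hx y hy)

theorem mul_rpow_le_mul_add {lam A B x τ : ℝ} (hlam : lam ∈ Ioo 0 1) (hA : 0 ≤ A) (hx : 0 ≤ x)
    (hτ : 0 ≤ τ) (hB : B ≤ A ^ lam * x ^ (1 - lam)) : B * τ ^ lam ≤ A * τ + x :=
  calc B * τ ^ lam ≤ A ^ lam * x ^ (1 - lam) * τ ^ lam :=
        mul_le_mul_of_nonneg_right hB (rpow_nonneg hτ _)
    _ = (A * τ) ^ lam * x ^ (1 - lam) := by rw [mul_rpow hA hτ]; ring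
    _ ≤ lam * (A * τ) + (1 - lam) * x :=
        geom_mean_le_arith_mean2_weighted hlam.1.le (by linarith [hlam.2]) (mul_nonneg hA hτ)
          hx (by ring)
    _ ≤ A * τ + x := by nlinarith [mul_nonneg hA hτ, hlam.1, hlam.2]

theorem le_of_bounded_descent {h : ℝ → ℝ} {a b c δ : ℝ} (hh : ContinuousOn h (Icc a b))
    (ha : c ≤ h a)
    (hdescent : ∀ s t, a ≤ s → s ≤ t → t ≤ b → (∀ u ∈ Ioo s t, h u ≤ c) → h s - δ ≤ h t) :
    ∀ t ∈ Icc a b, c - δ ≤ h t := by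
  intro t ht
  -- the last time before `t` at which `h` is above level `c`
  set S := Icc a t ∩ h ⁻¹' Ici c
  have hS : IsCompact S :=
    isCompact_Icc.of_isClosed_subset ((hh.mono (Icc_subset_Icc_right ht.2))
      |>.preimage_isClosed_of_isClosed isClosed_Icc isClosed_Ici) inter_subset_left
  obtain ⟨⟨has, hst⟩, hcs⟩ : sSup S ∈ S := hS.sSup_mem ⟨a, ⟨le_rfl, ht.1⟩, ha⟩
  have hbelow : ∀ u ∈ Ioo (sSup S) t, h u ≤ c := fun u hu =>
    le_of_not_ge fun hcu =>
      hu.1.not_ge (le_csSup hS.bddAbove ⟨⟨has.trans hu.1.le, hu.2.le⟩, hcu⟩)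
  have hcs : c ≤ h (sSup S) := hcs
  linarith [hdescent _ t has hst ht.2 hbelow]

theorem le_of_repulsive_drift {h g : ℝ → ℝ} {a b lam A B x : ℝ} (hlam : lam ∈ Ioo 0 1)
    (hA : 0 ≤ A) (hx : 0 ≤ x) (hB : B ≤ A ^ lam * x ^ (1 - lam))
    (hh : ContinuousOn h (Icc a b)) (hg : ContinuousOn g (Icc a b)) (ha : 2 * x ≤ h a)
    (hdrift : ∀ t ∈ Icc a b, h t ≤ 2 * x → A ≤ g t)
    (hinc : ∀ s t, a ≤ s → s ≤ t → t ≤ b →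
      (∫ u in s..t, g u) - B * (t - s) ^ lam ≤ h t - h s) :
    ∀ t ∈ Icc a b, x ≤ h t := by
  have hdescent : ∀ s t, a ≤ s → s ≤ t → t ≤ b → (∀ u ∈ Ioo s t, h u ≤ 2 * x) →
      h s - x ≤ h t := by
    intro s t has hst htb hbelow
    have hsub : Icc s t ⊆ Icc a b := Icc_subset_Icc has htb
    have hpush : ∫ _ in s..t, A ≤ ∫ u in s..t, g u :=
      intervalIntegral.integral_mono_on_of_le_Ioo hst intervalIntegrable_const
        ((hg.mono hsub).intervalIntegrable_of_Icc hst)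
        fun u hu => hdrift u (hsub (Ioo_subset_Icc_self hu)) (hbelow u hu)
    rw [intervalIntegral.integral_const, smul_eq_mul] at hpush
    linarith [mul_rpow_le_mul_add hlam hA hx (sub_nonneg.2 hst) hB, hinc s t has hst htb]
  intro t ht
  linarith [le_of_bounded_descent hh ha hdescent t ht]

theorem div_rpow_rpow_mul_rpow_eq {c gam lam x : ℝ} (hc : 0 ≤ c) (hx : 0 < x) :
    (c / (2 * x) ^ gam) ^ lam * x ^ (1 - lam) =
      c ^ lam / 2 ^ (gam * lam) / x ^ (gam * lam + lam - 1) := by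
  rw [div_rpow hc (by positivity), ← rpow_mul (by positivity), mul_rpow zero_le_two hx.le,
    rpow_sub hx, rpow_sub hx, rpow_add hx, rpow_one]
  field_simp

theorem le_div_rpow_rpow_mul_rpow {c gam lam L B : ℝ} (hc : 0 ≤ c) (hL : 0 < L) (hB : 0 < B)
    (hq : 0 < gam * lam + lam - 1)
    (hLc : L ≤ (c ^ lam / 2 ^ (gam * lam)) ^ (1 / (gam * lam + lam - 1))) :
    B ≤ (c / (2 * (L / B ^ (1 / (gam * lam + lam - 1)))) ^ gam) ^ lam *
      (L / B ^ (1 / (gam * lam + lam - 1))) ^ (1 - lam) := by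
  set q := gam * lam + lam - 1
  have hLq : L ^ q ≤ c ^ lam / 2 ^ (gam * lam) := by
    simpa [← rpow_mul (by positivity : (0:ℝ) ≤ c ^ lam / 2 ^ (gam * lam)), hq.ne'] using
      rpow_le_rpow hL.le hLc hq.le
  rw [div_rpow_rpow_mul_rpow_eq hc (by positivity), div_rpow hL.le (by positivity),
    ← rpow_mul hB.le, one_div_mul_cancel hq.ne', rpow_one, div_div_eq_mul_div,
    le_div_iff₀ (by positivity)]
  nlinarith

theorem sub_eq_intervalIntegral_add_sub {T Y0 s t : ℝ} {f Y Z : ℝ → ℝ}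
    (hf : ContinuousOn f (Icc 0 T))
    (hY : ∀ t ∈ Icc 0 T, Y t = Y0 + (∫ u in (0:ℝ)..t, f u) + Z t)
    (hs : 0 ≤ s) (hst : s ≤ t) (htT : t ≤ T) :
    Y t - Y s = (∫ u in s..t, f u) + (Z t - Z s) := by
  have hint : ∀ r ∈ Icc 0 T, IntervalIntegrable f volume 0 r :=
    fun r hr => (hf.mono (Icc_subset_Icc_right hr.2)).intervalIntegrable_of_Icc hr.1
  rw [hY t ⟨hs.trans hst, htT⟩, hY s ⟨hs, hst.trans htT⟩,
    ← intervalIntegral.integral_interval_sub_left (hint t ⟨hs.trans hst, htT⟩)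
      (hint s ⟨hs, hst.trans htT⟩)]
  ring

theorem gap_le_of_pathwise_solution {T lam K Lam gam c2 ystar Y0 x : ℝ}
    {phi psi Z Y : ℝ → ℝ} {b : ℝ → ℝ → ℝ} (hlam : lam ∈ Ioo 0 1) (hgam : 0 ≤ gam) (hc2 : 0 ≤ c2)
    (hx : 0 < x) (hxy : 2 * x ≤ ystar) (hx0 : 2 * x ≤ Y0 - phi 0) (hx0' : 2 * x ≤ psi 0 - Y0)
    (hKLam : K + Lam ≤ (c2 / (2 * x) ^ gam) ^ lam * x ^ (1 - lam))
    (hphiH : ∀ s ∈ Icc 0 T, ∀ t ∈ Icc 0 T, |phi t - phi s| ≤ K * |t - s| ^ lam)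
    (hpsiH : ∀ s ∈ Icc 0 T, ∀ t ∈ Icc 0 T, |psi t - psi s| ≤ K * |t - s| ^ lam)
    (hbcont : ContinuousOn (fun q : ℝ × ℝ => b q.1 q.2)
      {q : ℝ × ℝ | q.1 ∈ Icc 0 T ∧ phi q.1 < q.2 ∧ q.2 < psi q.1})
    (hblow : ∀ t ∈ Icc 0 T, ∀ y, phi t < y → y ≤ phi t + ystar → y < psi t →
      c2 / (y - phi t) ^ gam ≤ b t y)
    (hbup : ∀ t ∈ Icc 0 T, ∀ y, psi t - ystar ≤ y → y < psi t → phi t < y →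
      b t y ≤ -(c2 / (psi t - y) ^ gam))
    (hZ0 : Z 0 = 0) (hZH : ∀ s ∈ Icc 0 T, ∀ t ∈ Icc 0 T, |Z t - Z s| ≤ Lam * |t - s| ^ lam)
    (hYcont : ContinuousOn Y (Icc 0 T)) (hYin : ∀ t ∈ Icc 0 T, phi t < Y t ∧ Y t < psi t)
    (hYeq : ∀ t ∈ Icc 0 T, Y t = Y0 + (∫ s in (0:ℝ)..t, b s (Y s)) + Z t) :
    ∀ t ∈ Icc 0 T, phi t + x ≤ Y t ∧ Y t ≤ psi t - x := by
  intro t ht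
  have hT : 0 ≤ T := ht.1.trans ht.2
  have hY0 : Y 0 = Y0 := by simpa [hZ0] using hYeq 0 ⟨le_rfl, hT⟩
  have hbY : ContinuousOn (fun u => b u (Y u)) (Icc 0 T) :=
    hbcont.comp (continuousOn_id.prodMk hYcont) fun u hu => ⟨hu, hYin u hu⟩
  have hrepel : ∀ {d}, 0 < d → d ≤ 2 * x → c2 / (2 * x) ^ gam ≤ c2 / d ^ gam := fun hd hdx =>
    div_le_div_of_nonneg_left hc2 (rpow_pos_of_pos hd _) (rpow_le_rpow hd.le hdx hgam)
  have hA : 0 ≤ c2 / (2 * x) ^ gam := by positivity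
  have hdrift_low : ∀ u ∈ Icc 0 T, Y u - phi u ≤ 2 * x → c2 / (2 * x) ^ gam ≤ b u (Y u) :=
    fun u hu hle => (hrepel (sub_pos.2 (hYin u hu).1) hle).trans
      (hblow u hu _ (hYin u hu).1 (by linarith) (hYin u hu).2)
  have hdrift_up : ∀ u ∈ Icc 0 T, psi u - Y u ≤ 2 * x → c2 / (2 * x) ^ gam ≤ -b u (Y u) :=
    fun u hu hle => le_neg.1 ((hbup u hu _ (by linarith) (hYin u hu).2 (hYin u hu).1).trans
      (neg_le_neg (hrepel (sub_pos.2 (hYin u hu).2) hle)))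
  have hHolder : ∀ s t, 0 ≤ s → s ≤ t → t ≤ T →
      |Z t - Z s| ≤ Lam * (t - s) ^ lam ∧ |phi t - phi s| ≤ K * (t - s) ^ lam ∧
        |psi t - psi s| ≤ K * (t - s) ^ lam := by
    intro s t hs hst htT
    have hs' : s ∈ Icc 0 T := ⟨hs, hst.trans htT⟩
    have ht' : t ∈ Icc 0 T := ⟨hs.trans hst, htT⟩
    rw [← abs_of_nonneg (sub_nonneg.2 hst)]
    exact ⟨hZH s hs' t ht', hphiH s hs' t ht', hpsiH s hs' t ht'⟩
  constructor
  · have := le_of_repulsive_drift (h := fun t => Y t - phi t) hlam hA hx.le hKLam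
      (hYcont.sub (continuousOn_of_abs_sub_le_mul_rpow hlam.1 hphiH)) hbY (by simpa [hY0])
      hdrift_low
      (fun s t hs hst htT => by
        obtain ⟨hZ, hphi, -⟩ := hHolder s t hs hst htT
        linarith [sub_eq_intervalIntegral_add_sub hbY hYeq hs hst htT, abs_le.1 hZ,
          abs_le.1 hphi])
      t ht
    linarith
  · have := le_of_repulsive_drift (h := fun t => psi t - Y t)
      (g := fun u => -b u (Y u)) hlam hA hx.le hKLam
      ((continuousOn_of_abs_sub_le_mul_rpow hlam.1 hpsiH).sub hYcont) hbY.neg (by simpa [hY0])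
      hdrift_up
      (fun s t hs hst htT => by
        obtain ⟨hZ, -, hpsi⟩ := hHolder s t hs hst htT
        rw [intervalIntegral.integral_neg]
        linarith [sub_eq_intervalIntegral_add_sub hbY hYeq hs hst htT, abs_le.1 hZ,
          abs_le.1 hpsi])
      t ht
    linarith

theorem stmt_1_general
    (T lam : ℝ) (hlam : lam ∈ Set.Ioo (0:ℝ) 1)
    (phi psi : ℝ → ℝ) (K : ℝ) (hK : 0 < K)
    (hphiH : ∀ s ∈ Set.Icc (0:ℝ) T, ∀ t ∈ Set.Icc (0:ℝ) T, |phi t - phi s| ≤ K * |t - s| ^ lam)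
    (hpsiH : ∀ s ∈ Set.Icc (0:ℝ) T, ∀ t ∈ Set.Icc (0:ℝ) T, |psi t - psi s| ≤ K * |t - s| ^ lam)
    (b : ℝ → ℝ → ℝ) (c2 ystar gam : ℝ)
    (hc2 : 0 < c2) (hystar : 0 < ystar)
    (hgam : 1 / lam - 1 < gam)
    (hB2cont : ContinuousOn (fun q : ℝ × ℝ => b q.1 q.2)
      {q : ℝ × ℝ | q.1 ∈ Set.Icc (0:ℝ) T ∧ phi q.1 < q.2 ∧ q.2 < psi q.1})
    (hB3low : ∀ t ∈ Set.Icc (0:ℝ) T, ∀ y : ℝ, phi t < y → y ≤ phi t + ystar → y < psi t →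
      c2 / (y - phi t) ^ gam ≤ b t y)
    (hB3up : ∀ t ∈ Set.Icc (0:ℝ) T, ∀ y : ℝ, psi t - ystar ≤ y → y < psi t → phi t < y →
      b t y ≤ -(c2 / (psi t - y) ^ gam))
    (Y0 : ℝ) (hB1 : phi 0 < Y0 ∧ Y0 < psi 0)
    :
    ∃ L1 L2 : ℝ, 0 < L1 ∧ 0 < L2 ∧
      ∀ (Z : ℝ → ℝ) (Lam : ℝ), 0 < Lam → Z 0 = 0 →
        (∀ s ∈ Set.Icc (0:ℝ) T, ∀ t ∈ Set.Icc (0:ℝ) T, |Z t - Z s| ≤ Lam * |t - s| ^ lam) →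
        ∀ Y : ℝ → ℝ, ContinuousOn Y (Set.Icc (0:ℝ) T) →
          (∀ t ∈ Set.Icc (0:ℝ) T, phi t < Y t ∧ Y t < psi t) →
          (∀ t ∈ Set.Icc (0:ℝ) T, Y t = Y0 + (∫ s in (0:ℝ)..t, b s (Y s)) + Z t) →
          ∀ t ∈ Set.Icc (0:ℝ) T,
            phi t + L1 / (L2 + Lam) ^ (1 / (gam * lam + lam - 1)) ≤ Y t ∧
            Y t ≤ psi t - L1 / (L2 + Lam) ^ (1 / (gam * lam + lam - 1)) := by
  have hgam0 : 0 < gam := by linarith [(one_lt_div hlam.1).2 hlam.2]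
  have hq : 0 < gam * lam + lam - 1 := by
    have : 1 / lam * lam = 1 := one_div_mul_cancel hlam.1.ne'
    nlinarith [hlam.1]
  set e := 1 / (gam * lam + lam - 1)
  set m := min ystar (min (Y0 - phi 0) (psi 0 - Y0))
  have hm : 0 < m := lt_min hystar (lt_min (by linarith [hB1.1]) (by linarith [hB1.2]))
  set L1 := min ((c2 ^ lam / 2 ^ (gam * lam)) ^ e) (m * K ^ e / 2)
  have hL1 : 0 < L1 := by positivity
  refine ⟨L1, K, hL1, hK, fun Z Lam hLam hZ0 hZH Y hYcont hYin hYeq => ?_⟩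
  have hx : 2 * (L1 / (K + Lam) ^ e) ≤ m :=
    calc 2 * (L1 / (K + Lam) ^ e) ≤ 2 * (m * K ^ e / 2 / K ^ e) := by
          gcongr
          · exact min_le_right _ _
          · linarith
      _ = m := by field_simp
  exact gap_le_of_pathwise_solution hlam hgam0.le hc2.le (by positivity)
    (hx.trans (min_le_left _ _)) (hx.trans ((min_le_right _ _).trans (min_le_left _ _)))
    (hx.trans ((min_le_right _ _).trans (min_le_right _ _)))
    (le_div_rpow_rpow_mul_rpow hc2.le hL1 (by linarith) hq (min_le_left _ _))
    hphiH hpsiH hB2cont hB3low hB3up hZ0 hZH hYcont hYin hYeq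

theorem stmt_1
    (T lam : ℝ) (hT : 0 < T) (hlam : lam ∈ Set.Ioo (0:ℝ) 1)
    (phi psi : ℝ → ℝ) (K : ℝ) (hK : 0 < K)
    (hphiH : ∀ s ∈ Set.Icc (0:ℝ) T, ∀ t ∈ Set.Icc (0:ℝ) T, |phi t - phi s| ≤ K * |t - s| ^ lam)
    (hpsiH : ∀ s ∈ Set.Icc (0:ℝ) T, ∀ t ∈ Set.Icc (0:ℝ) T, |psi t - psi s| ≤ K * |t - s| ^ lam)
    (hphipsi : ∀ t ∈ Set.Icc (0:ℝ) T, phi t < psi t)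
    (b : ℝ → ℝ → ℝ) (c1 p c2 ystar gam : ℝ)
    (hc1 : 0 < c1) (hp : 1 < p) (hc2 : 0 < c2) (hystar : 0 < ystar)
    (hgam : 1 / lam - 1 < gam)
    (hB2cont : ContinuousOn (fun q : ℝ × ℝ => b q.1 q.2)
      {q : ℝ × ℝ | q.1 ∈ Set.Icc (0:ℝ) T ∧ phi q.1 < q.2 ∧ q.2 < psi q.1})
    (hB2lip : ∀ ε : ℝ, 0 < ε → ε < min 1 ((⨆ t : Set.Icc (0:ℝ) T, |psi t.1 - phi t.1|) / 2) →
      ∀ t1 ∈ Set.Icc (0:ℝ) T, ∀ t2 ∈ Set.Icc (0:ℝ) T, ∀ y1 y2 : ℝ,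
        phi t1 + ε < y1 → y1 < psi t1 - ε → phi t2 + ε < y2 → y2 < psi t2 - ε →
        |b t1 y1 - b t2 y2| ≤ c1 / ε ^ p * (|y1 - y2| + |t1 - t2| ^ lam))
    (hB3low : ∀ t ∈ Set.Icc (0:ℝ) T, ∀ y : ℝ, phi t < y → y ≤ phi t + ystar → y < psi t →
      c2 / (y - phi t) ^ gam ≤ b t y)
    (hB3up : ∀ t ∈ Set.Icc (0:ℝ) T, ∀ y : ℝ, psi t - ystar ≤ y → y < psi t → phi t < y →
      b t y ≤ -(c2 / (psi t - y) ^ gam))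
    (Y0 : ℝ) (hB1 : phi 0 < Y0 ∧ Y0 < psi 0)
    :
    ∃ L1 L2 : ℝ, 0 < L1 ∧ 0 < L2 ∧
      ∀ (Z : ℝ → ℝ) (Lam : ℝ), 0 < Lam → Z 0 = 0 →
        (∀ s ∈ Set.Icc (0:ℝ) T, ∀ t ∈ Set.Icc (0:ℝ) T, |Z t - Z s| ≤ Lam * |t - s| ^ lam) →
        ∀ Y : ℝ → ℝ, ContinuousOn Y (Set.Icc (0:ℝ) T) →
          (∀ t ∈ Set.Icc (0:ℝ) T, phi t < Y t ∧ Y t < psi t) →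
          (∀ t ∈ Set.Icc (0:ℝ) T, Y t = Y0 + (∫ s in (0:ℝ)..t, b s (Y s)) + Z t) →
          ∀ t ∈ Set.Icc (0:ℝ) T,
            phi t + L1 / (L2 + Lam) ^ (1 / (gam * lam + lam - 1)) ≤ Y t ∧
            Y t ≤ psi t - L1 / (L2 + Lam) ^ (1 / (gam * lam + lam - 1)) :=
  stmt_1_general T lam hlam phi psi K hK hphiH hpsiH b c2 ystar gam hc2 hystar hgam hB2cont hB3low
    hB3up Y0 hB1
end

section
/- Under Assumptions (A1)–(A3), there exist constants L1, L2, L3, L4 > 0, depending only on Y(0), φ, the drift b (through c1, c2, p, y_*, γ), λ and T (in particular not on Z, Λ or N), such that for every noise path Z with Hölder constant Λ, the pathwise solution Y satisfies φ(t) + L1/(L2 + Λ)^{1/(γλ+λ−1)} ≤ Y(t) ≤ L3 + L4·Λ for all t ∈ [0,T]. -/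
/-!
Write `X = Y - φ`. If `X t < a`, let `r` be the last time before `t` with `X r = 2a`. On `[r, t]`
(A3) bounds the drift below by `c = c₂ / (2a)^γ`, while `Z - φ` loses at most `(K + Λ)(t - r)^λ`,
so `a + c s < (K + Λ) s^λ` for `s = t - r`. Weighted AM–GM gives `(K + Λ) s^λ ≤ a + c s` as soon
as `K + Λ ≤ c^λ a^(1-λ)`, i.e. `a^(γλ+λ-1) (K + Λ) ≤ c₂^λ / 2^(γλ)`; this is what fixes
`a = L₁ / (K + Λ)^(1/(γλ+λ-1))`.

Above the barrier `φ + 1` the Lipschitz bound (A2) with `ε = 1/2` makes the drift at most linear in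
`|y|`, so Grönwall's inequality for `Y - Z`, started at the last visit of `φ + 1`, bounds `Y`
linearly in the Hölder constant `Λ` of the noise.
-/

open MeasureTheory Set Real Filter Topology

def HolderOnIcc (T K lam : ℝ) (f : ℝ → ℝ) : Prop :=
  ∀ s ∈ Icc (0:ℝ) T, ∀ t ∈ Icc (0:ℝ) T, |f t - f s| ≤ K * |t - s| ^ lam

namespace HolderOnIcc

variable {T K lam : ℝ} {f : ℝ → ℝ}

lemma abs_sub_le (hf : HolderOnIcc T K lam f) (hK : 0 ≤ K) (hlam : 0 ≤ lam) {s t : ℝ}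
    (hs : s ∈ Icc 0 T) (ht : t ∈ Icc 0 T) : |f t - f s| ≤ K * T ^ lam := by
  refine (hf s hs t ht).trans (mul_le_mul_of_nonneg_left (rpow_le_rpow (abs_nonneg _) ?_ hlam) hK)
  exact abs_sub_le_iff.2 ⟨by linarith [hs.1, ht.2], by linarith [hs.2, ht.1]⟩

lemma continuousOn (hf : HolderOnIcc T K lam f) (hlam : 0 < lam) : ContinuousOn f (Icc 0 T) := by
  intro s hs
  have hlim : Tendsto (fun t => K * |t - s| ^ lam) (𝓝[Icc 0 T] s) (𝓝 0) := by
    have : Continuous fun t => K * |t - s| ^ lam := by fun_prop (disch := positivity)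
    simpa [zero_rpow hlam.ne'] using (this.tendsto s).mono_left nhdsWithin_le_nhds
  rw [ContinuousWithinAt, tendsto_iff_dist_tendsto_zero]
  refine squeeze_zero' (Eventually.of_forall fun _ => dist_nonneg) ?_ hlim
  filter_upwards [self_mem_nhdsWithin] with t ht
  exact hf s hs t ht

end HolderOnIcc

lemma exists_last_eq_of_continuousOn {X : ℝ → ℝ} {r₀ t v : ℝ} (hr₀t : r₀ ≤ t)
    (hX : ContinuousOn X (Icc r₀ t)) (h₀ : v ≤ X r₀) (ht : X t ≤ v) :
    ∃ r ∈ Icc r₀ t, X r = v ∧ ∀ u ∈ Icc r t, X u ≤ v := by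
  set S := Icc r₀ t ∩ X ⁻¹' Ici v
  have hS : IsCompact S := isCompact_Icc.of_isClosed_subset
    (hX.preimage_isClosed_of_isClosed isClosed_Icc isClosed_Ici) inter_subset_left
  have hrS : sSup S ∈ S := hS.sSup_mem ⟨r₀, left_mem_Icc.2 hr₀t, h₀⟩
  set r := sSup S
  have hright : ∀ u ∈ Icc r t, v ≤ X u → u = r := fun u hu hvu =>
    le_antisymm (le_csSup hS.bddAbove ⟨⟨hrS.1.1.trans hu.1, hu.2⟩, hvu⟩) hu.1
  have hXr : X r = v := by
    obtain ⟨w, hw, hXw⟩ := intermediate_value_Icc' hrS.1.2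
      (hX.mono (Icc_subset_Icc hrS.1.1 le_rfl)) ⟨ht, hrS.2⟩
    rwa [← hright w hw hXw.ge]
  refine ⟨r, hrS.1, hXr, fun u hu => ?_⟩
  by_contra! hlt
  rw [hright u hu hlt.le] at hlt
  exact hlt.ne' hXr

lemma mul_rpow_le_add {M a c s lam : ℝ} (ha : 0 ≤ a) (hc : 0 ≤ c) (hs : 0 ≤ s)
    (hlam0 : 0 ≤ lam) (hlam1 : lam ≤ 1) (hM : M ≤ c ^ lam * a ^ (1 - lam)) :
    M * s ^ lam ≤ a + c * s :=
  calc M * s ^ lam ≤ c ^ lam * a ^ (1 - lam) * s ^ lam :=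
        mul_le_mul_of_nonneg_right hM (rpow_nonneg hs _)
    _ = (c * s) ^ lam * a ^ (1 - lam) := by rw [mul_rpow hc hs]; ring
    _ ≤ lam * (c * s) + (1 - lam) * a :=
        geom_mean_le_arith_mean2_weighted hlam0 (by linarith) (by positivity) ha (by ring)
    _ ≤ a + c * s := by nlinarith [mul_nonneg hc hs]

lemma le_of_forall_increment_ge {X : ℝ → ℝ} {t a c M lam : ℝ} (ht : 0 ≤ t)
    (hX : ContinuousOn X (Icc 0 t)) (ha : 0 ≤ a) (hc : 0 ≤ c) (hlam0 : 0 ≤ lam) (hlam1 : lam ≤ 1)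
    (hM : M ≤ c ^ lam * a ^ (1 - lam)) (h₀ : 2 * a ≤ X 0)
    (hinc : ∀ r ∈ Icc 0 t, (∀ u ∈ Icc r t, X u ≤ 2 * a) →
      X r + c * (t - r) - M * (t - r) ^ lam ≤ X t) :
    a ≤ X t := by
  by_contra! hlt
  obtain ⟨r, hr, hXr, hle⟩ := exists_last_eq_of_continuousOn ht hX h₀ (by linarith)
  have := hinc r hr hle
  have := mul_rpow_le_add ha hc (sub_nonneg.2 hr.2) hlam0 hlam1 hM
  linarith

lemma sub_eq_integral_add_sub {g Z Y : ℝ → ℝ} {T Y₀ : ℝ} (hT : 0 ≤ T)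
    (hg : ContinuousOn g (Icc 0 T))
    (hY : ∀ t ∈ Icc (0:ℝ) T, Y t = Y₀ + (∫ s in (0:ℝ)..t, g s) + Z t) :
    ∀ u ∈ Icc 0 T, ∀ v ∈ Icc 0 T, Y v - Y u = (∫ s in u..v, g s) + (Z v - Z u) := by
  intro u hu v hv
  have hint : ∀ x ∈ Icc 0 T, ∀ y ∈ Icc 0 T, IntervalIntegrable g volume x y :=
    fun x hx y hy => (hg.mono (uIcc_subset_Icc hx hy)).intervalIntegrable
  rw [hY u hu, hY v hv, ← intervalIntegral.integral_add_adjacent_intervals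
    (hint 0 ⟨le_rfl, hT⟩ u hu) (hint u hu v hv)]
  ring

lemma phi_add_le_of_drift_ge {g phi Z Y : ℝ → ℝ} {T K Lam lam a c : ℝ}
    (hphi : HolderOnIcc T K lam phi) (hZ : HolderOnIcc T Lam lam Z)
    (hX : ContinuousOn (fun u => Y u - phi u) (Icc 0 T)) (hg : ContinuousOn g (Icc 0 T))
    (hinc : ∀ u ∈ Icc 0 T, ∀ v ∈ Icc 0 T, Y v - Y u = (∫ s in u..v, g s) + (Z v - Z u))
    (ha : 0 ≤ a) (hc : 0 ≤ c) (hlam0 : 0 ≤ lam) (hlam1 : lam ≤ 1)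
    (hM : K + Lam ≤ c ^ lam * a ^ (1 - lam)) (h₀ : 2 * a ≤ Y 0 - phi 0)
    (hdrift : ∀ u ∈ Icc 0 T, Y u - phi u ≤ 2 * a → c ≤ g u) :
    ∀ t ∈ Icc 0 T, phi t + a ≤ Y t := by
  intro t ht
  have hsub : Icc 0 t ⊆ Icc 0 T := Icc_subset_Icc le_rfl ht.2
  suffices a ≤ Y t - phi t by linarith
  refine le_of_forall_increment_ge (X := fun u => Y u - phi u) ht.1 (hX.mono hsub) ha hc hlam0
    hlam1 hM h₀ fun r hr hle => ?_
  have hrT := hsub hr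
  have hint : c * (t - r) ≤ ∫ s in r..t, g s := by
    simpa [mul_comm] using intervalIntegral.integral_mono_on hr.2
      (intervalIntegrable_const (μ := volume))
      ((hg.mono (Icc_subset_Icc hrT.1 ht.2)).intervalIntegrable_of_Icc hr.2)
      fun u hu => hdrift u ⟨hrT.1.trans hu.1, hu.2.trans ht.2⟩ (hle u hu)
  have hZrt := (abs_le.1 (hZ r hrT t ht)).1
  have hphirt := (abs_le.1 (hphi r hrT t ht)).2
  rw [abs_of_nonneg (sub_nonneg.2 hr.2)] at hZrt hphirt
  have := hinc r hrT t ht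
  linarith [add_mul K Lam ((t - r) ^ lam)]

lemma abs_add_integral_le_gronwallBound {g : ℝ → ℝ} {r t F₀ C e : ℝ} (hrt : r ≤ t)
    (hg : ContinuousOn g (Icc r t))
    (hbound : ∀ u ∈ Icc r t, |g u| ≤ C * |F₀ + ∫ s in r..u, g s| + e) :
    |F₀ + ∫ s in r..t, g s| ≤ gronwallBound |F₀| C e (t - r) := by
  have hF : ∀ x ∈ Icc r t,
      HasDerivWithinAt (fun u => F₀ + ∫ s in r..u, g s) (g x) (Icc r t) x := by
    intro x hx
    have : Fact (x ∈ Icc r t) := ⟨hx⟩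
    exact (intervalIntegral.integral_hasDerivWithinAt_right
      ((hg.mono (Icc_subset_Icc le_rfl hx.2)).intervalIntegrable_of_Icc hx.1)
      (hg.stronglyMeasurableAtFilter_nhdsWithin measurableSet_Icc x) (hg x hx)).const_add F₀
  refine norm_le_gronwallBound_of_norm_deriv_right_le (fun x hx => (hF x hx).continuousWithinAt)
    (fun x hx => (hF x (Ico_subset_Icc_self hx)).mono_of_mem_nhdsWithin
      (mem_of_superset (Icc_mem_nhdsGE hx.2) (Icc_subset_Icc hx.1 le_rfl)))
    (by simp) (fun x hx => hbound x (Ico_subset_Icc_self hx)) t ⟨hrt, le_rfl⟩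

lemma le_of_abs_drift_le {g Z Y : ℝ → ℝ} {r t C B z : ℝ} (hrt : r ≤ t)
    (hg : ContinuousOn g (Icc r t))
    (hinc : ∀ u ∈ Icc r t, Y u - Y r = (∫ s in r..u, g s) + (Z u - Z r))
    (hC : 0 < C) (hB : 0 ≤ B) (hZ : ∀ u ∈ Icc r t, |Z u| ≤ z)
    (hdrift : ∀ u ∈ Icc r t, |g u| ≤ C * |Y u| + B) :
    Y t ≤ (|Y r| + 2 * z + B / C) * exp (C * (t - r)) + z := by
  have hF : ∀ u ∈ Icc r t, Y u - Z u = Y r - Z r + ∫ s in r..u, g s := fun u hu => by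
    linarith [hinc u hu]
  have hYF : ∀ u ∈ Icc r t, |Y u| ≤ |Y u - Z u| + z := fun u hu => by
    linarith [abs_sub_abs_le_abs_sub (Y u) (Z u), hZ u hu]
  have hgr := abs_add_integral_le_gronwallBound (F₀ := Y r - Z r) (C := C) (e := C * z + B) hrt hg
    fun u hu => by rw [← hF u hu]; nlinarith [hdrift u hu, hYF u hu]
  rw [← hF t ⟨hrt, le_rfl⟩, gronwallBound_of_K_ne_0 hC.ne'] at hgr
  have hexp : 1 ≤ exp (C * (t - r)) := one_le_exp (mul_nonneg hC.le (sub_nonneg.2 hrt))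
  have hz : 0 ≤ z := (abs_nonneg _).trans (hZ r ⟨le_rfl, hrt⟩)
  have hFr : |Y r - Z r| ≤ |Y r| + z := (abs_sub _ _).trans (by linarith [hZ r ⟨le_rfl, hrt⟩])
  have hYt : Y t ≤ |Y t - Z t| + z := (le_abs_self _).trans (hYF t ⟨hrt, le_rfl⟩)
  calc Y t ≤ |Y r - Z r| * exp (C * (t - r)) + (C * z + B) / C * (exp (C * (t - r)) - 1) + z := by
        linarith
    _ ≤ (|Y r| + 2 * z + B / C) * exp (C * (t - r)) + z := by
        rw [add_div, mul_div_cancel_left₀ _ hC.ne']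
        nlinarith [div_nonneg hB hC.le]

lemma rpow_mul_rpow_eq_div {a c gam lam : ℝ} (ha : 0 < a) (hc : 0 ≤ c) :
    (c / (2 * a) ^ gam) ^ lam * a ^ (1 - lam) =
      c ^ lam / 2 ^ (gam * lam) / a ^ (gam * lam + lam - 1) := by
  rw [div_rpow hc (by positivity), ← rpow_mul (by positivity), mul_rpow (by norm_num) ha.le,
    rpow_sub ha, rpow_sub ha, rpow_add ha, rpow_one]
  field_simp

lemma le_rpow_mul_rpow_of_level {c gam lam L N : ℝ} (hc : 0 ≤ c) (hL : 0 < L) (hN : 0 < N)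
    (hθ : 0 < gam * lam + lam - 1)
    (hLc : L ≤ (c ^ lam / 2 ^ (gam * lam)) ^ (1 / (gam * lam + lam - 1))) :
    N ≤ (c / (2 * (L / N ^ (1 / (gam * lam + lam - 1)))) ^ gam) ^ lam *
      (L / N ^ (1 / (gam * lam + lam - 1))) ^ (1 - lam) := by
  set θ := gam * lam + lam - 1
  have hpow : ∀ x : ℝ, 0 ≤ x → (x ^ (1 / θ)) ^ θ = x := fun x hx => by
    rw [← rpow_mul hx, one_div_mul_cancel hθ.ne', rpow_one]
  rw [rpow_mul_rpow_eq_div (by positivity) hc, le_div_iff₀ (by positivity),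
    div_rpow hL.le (by positivity), hpow N hN.le, mul_div_cancel₀ _ hN.ne',
    ← hpow (c ^ lam / 2 ^ (gam * lam)) (by positivity)]
  exact rpow_le_rpow hL.le hLc hθ.le

lemma le_of_abs_drift_le_above_barrier {g phi Z Y : ℝ → ℝ} {T ε C B R z : ℝ}
    (hX : ContinuousOn (fun u => Y u - phi u) (Icc 0 T)) (hg : ContinuousOn g (Icc 0 T))
    (hinc : ∀ u ∈ Icc 0 T, ∀ v ∈ Icc 0 T, Y v - Y u = (∫ s in u..v, g s) + (Z v - Z u))
    (hC : 0 < C) (hB : 0 ≤ B) (hZ : ∀ u ∈ Icc 0 T, |Z u| ≤ z)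
    (hY₀ : |Y 0| ≤ R) (hphi : ∀ u ∈ Icc 0 T, |phi u + ε| ≤ R)
    (hdrift : ∀ u ∈ Icc 0 T, phi u + ε ≤ Y u → |g u| ≤ C * |Y u| + B) :
    ∀ t ∈ Icc 0 T, Y t ≤ (R + 2 * z + B / C) * exp (C * T) + z := by
  intro t ht
  have hsub : Icc 0 t ⊆ Icc 0 T := Icc_subset_Icc le_rfl ht.2
  have hz : 0 ≤ z := (abs_nonneg _).trans (hZ t ht)
  have hR : 0 ≤ R := (abs_nonneg _).trans hY₀
  obtain hle | hlt := le_or_gt (Y t) (phi t + ε)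
  · have := one_le_exp (mul_nonneg hC.le (ht.1.trans ht.2))
    nlinarith [(le_abs_self _).trans (hphi t ht), div_nonneg hB hC.le]
  obtain ⟨r, hr, hYr, hr_le⟩ : ∃ r ∈ Icc 0 t, |Y r| ≤ R ∧ ∀ u ∈ Icc r t, phi u + ε ≤ Y u := by
    by_cases hcross : ∃ u ∈ Icc 0 t, Y u ≤ phi u + ε
    · obtain ⟨u, hu, hYu⟩ := hcross
      obtain ⟨r, hr, hXr, hle⟩ := exists_last_eq_of_continuousOn (X := fun w => -(Y w - phi w))
        (v := -ε) hu.2 (hX.mono (Icc_subset_Icc (hsub hu).1 ht.2)).neg (by linarith)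
        (by linarith)
      have hYr : Y r = phi r + ε := by linarith
      exact ⟨r, ⟨hu.1.trans hr.1, hr.2⟩, hYr ▸ hphi r (hsub ⟨hu.1.trans hr.1, hr.2⟩),
        fun w hw => by linarith [hle w hw]⟩
    · push Not at hcross
      exact ⟨0, ⟨le_rfl, ht.1⟩, hY₀, fun u hu => (hcross u hu).le⟩
  have hrT := hsub hr
  have hsub' : Icc r t ⊆ Icc 0 T := Icc_subset_Icc hrT.1 ht.2
  calc Y t ≤ (|Y r| + 2 * z + B / C) * exp (C * (t - r)) + z :=
        le_of_abs_drift_le hr.2 (hg.mono hsub') (fun u hu => hinc r hrT u (hsub' hu)) hC hB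
          (fun u hu => hZ u (hsub' hu)) (fun u hu => hdrift u (hsub' hu) (hr_le u hu))
    _ ≤ (R + 2 * z + B / C) * exp (C * T) + z := by
        gcongr
        linarith [hr.1, ht.2]

lemma abs_le_linear_of_lipschitz_above {b : ℝ → ℝ → ℝ} {phi : ℝ → ℝ} {T lam L ε : ℝ} (hT : 0 ≤ T)
    (hlam : 0 ≤ lam) (hL : 0 ≤ L) (hε : ε < 1)
    (hlip : ∀ t1 ∈ Icc (0:ℝ) T, ∀ t2 ∈ Icc (0:ℝ) T, ∀ y1 y2 : ℝ,
      phi t1 + ε < y1 → phi t2 + ε < y2 → |b t1 y1 - b t2 y2| ≤ L * (|y1 - y2| + |t1 - t2| ^ lam))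
    {u y : ℝ} (hu : u ∈ Icc 0 T) (hy : phi u + ε < y) :
    |b u y| ≤ L * |y| + (|b 0 (phi 0 + 1)| + L * (|phi 0| + 1 + T ^ lam)) := by
  have hlip0 := hlip u hu 0 ⟨le_rfl, hT⟩ y (phi 0 + 1) hy (by linarith)
  have hy' : |y - (phi 0 + 1)| ≤ |y| + (|phi 0| + 1) :=
    (abs_sub _ _).trans (add_le_add_right ((abs_add_le _ _).trans_eq (by simp)) _)
  have hu' : |u - 0| ^ lam ≤ T ^ lam := by
    rw [sub_zero, abs_of_nonneg hu.1]
    exact rpow_le_rpow hu.1 hu.2 hlam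
  have := mul_le_mul_of_nonneg_left (add_le_add hy' hu') hL
  linarith [abs_sub_abs_le_abs_sub (b u y) (b 0 (phi 0 + 1))]

lemma phi_add_div_rpow_le {g phi Z Y : ℝ → ℝ} {T K Lam lam gam c A L : ℝ}
    (hphi : HolderOnIcc T K lam phi) (hZ : HolderOnIcc T Lam lam Z)
    (hX : ContinuousOn (fun u => Y u - phi u) (Icc 0 T)) (hg : ContinuousOn g (Icc 0 T))
    (hinc : ∀ u ∈ Icc 0 T, ∀ v ∈ Icc 0 T, Y v - Y u = (∫ s in u..v, g s) + (Z v - Z u))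
    (hlam0 : 0 ≤ lam) (hlam1 : lam ≤ 1) (hθ : 0 < gam * lam + lam - 1) (hgam : 0 ≤ gam)
    (hc : 0 ≤ c) (hK : 0 < K) (hLam : 0 ≤ Lam) (hA : 0 ≤ A) (hL : 0 < L)
    (hLc : L ≤ (c ^ lam / 2 ^ (gam * lam)) ^ (1 / (gam * lam + lam - 1)))
    (hLA : L ≤ A * K ^ (1 / (gam * lam + lam - 1))) (h₀ : 2 * A ≤ Y 0 - phi 0)
    (hYphi : ∀ u ∈ Icc 0 T, phi u < Y u)
    (hdrift : ∀ u ∈ Icc 0 T, Y u - phi u ≤ 2 * A → c / (Y u - phi u) ^ gam ≤ g u) :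
    ∀ t ∈ Icc 0 T, phi t + L / (K + Lam) ^ (1 / (gam * lam + lam - 1)) ≤ Y t := by
  set a := L / (K + Lam) ^ (1 / (gam * lam + lam - 1))
  have ha : a ≤ A := by
    rw [div_le_iff₀ (by positivity)]
    exact hLA.trans (mul_le_mul_of_nonneg_left
      (rpow_le_rpow hK.le (by linarith) (by positivity)) hA)
  refine phi_add_le_of_drift_ge (c := c / (2 * a) ^ gam) hphi hZ hX hg hinc (by positivity)
    (by positivity) hlam0 hlam1 (le_rpow_mul_rpow_of_level hc hL (by positivity) hθ hLc)
    (by linarith) fun u hu hXu => (hdrift u hu (by linarith)).trans' ?_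
  have := sub_pos.2 (hYphi u hu)
  gcongr

lemma le_add_mul_of_lipschitz_above {b : ℝ → ℝ → ℝ} {phi Z Y : ℝ → ℝ} {T lam K Lam L ε Y₀ : ℝ}
    (hT : 0 ≤ T) (hlam : 0 ≤ lam) (hK : 0 ≤ K) (hLam : 0 ≤ Lam) (hL : 0 < L) (hε : ε < 1)
    (hphi : HolderOnIcc T K lam phi) (hZ : HolderOnIcc T Lam lam Z) (hZ0 : Z 0 = 0)
    (hlip : ∀ t1 ∈ Icc (0:ℝ) T, ∀ t2 ∈ Icc (0:ℝ) T, ∀ y1 y2 : ℝ,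
      phi t1 + ε < y1 → phi t2 + ε < y2 → |b t1 y1 - b t2 y2| ≤ L * (|y1 - y2| + |t1 - t2| ^ lam))
    (hX : ContinuousOn (fun u => Y u - phi u) (Icc 0 T))
    (hg : ContinuousOn (fun u => b u (Y u)) (Icc 0 T))
    (hinc : ∀ u ∈ Icc 0 T, ∀ v ∈ Icc 0 T,
      Y v - Y u = (∫ s in u..v, b s (Y s)) + (Z v - Z u))
    (hY₀ : Y 0 = Y₀) :
    ∀ t ∈ Icc 0 T, Y t ≤ (|Y₀| + |phi 0| + K * T ^ lam + 1 +
      (|b 0 (phi 0 + 1)| + L * (|phi 0| + 1 + T ^ lam)) / L) * exp (L * T) +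
        (2 * exp (L * T) + 1) * T ^ lam * Lam := by
  have h0T : (0:ℝ) ∈ Icc 0 T := ⟨le_rfl, hT⟩
  have hZb : ∀ u ∈ Icc 0 T, |Z u| ≤ Lam * T ^ lam := fun u hu => by
    simpa [hZ0] using hZ.abs_sub_le hLam hlam h0T hu
  have hphib : ∀ u ∈ Icc 0 T, |phi u + 1| ≤ |Y₀| + |phi 0| + K * T ^ lam + 1 := fun u hu => by
    linarith [hphi.abs_sub_le hK hlam h0T hu, abs_add_le (phi u) 1, (abs_one : |(1:ℝ)| = 1),
      abs_sub_abs_le_abs_sub (phi u) (phi 0), abs_nonneg Y₀]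
  intro t ht
  have := le_of_abs_drift_le_above_barrier hX hg hinc hL (by positivity) hZb
    (hY₀ ▸ by linarith [abs_nonneg (phi 0), mul_nonneg hK (rpow_nonneg hT lam)]) hphib
    (fun u hu hYu => abs_le_linear_of_lipschitz_above hT hlam hL.le hε hlip hu (by linarith)) t ht
  linarith

theorem stmt_3_general
    (T lam : ℝ) (hT : 0 < T) (hlam : lam ∈ Set.Ioo (0:ℝ) 1)
    (phi : ℝ → ℝ) (K : ℝ) (hK : 0 < K)
    (hphiH : ∀ s ∈ Set.Icc (0:ℝ) T, ∀ t ∈ Set.Icc (0:ℝ) T, |phi t - phi s| ≤ K * |t - s| ^ lam)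
    (b : ℝ → ℝ → ℝ) (c1 p c2 ystar gam : ℝ)
    (hc1 : 0 < c1) (hc2 : 0 < c2) (hystar : 0 < ystar)
    (hgam : 1 / lam - 1 < gam)
    (hA2cont : ContinuousOn (fun q : ℝ × ℝ => b q.1 q.2)
      {q : ℝ × ℝ | q.1 ∈ Set.Icc (0:ℝ) T ∧ phi q.1 < q.2})
    (hA2lip : ∀ ε : ℝ, 0 < ε → ε < 1 →
      ∀ t1 ∈ Set.Icc (0:ℝ) T, ∀ t2 ∈ Set.Icc (0:ℝ) T, ∀ y1 y2 : ℝ,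
        phi t1 + ε < y1 → phi t2 + ε < y2 →
        |b t1 y1 - b t2 y2| ≤ c1 / ε ^ p * (|y1 - y2| + |t1 - t2| ^ lam))
    (hA3 : ∀ t ∈ Set.Icc (0:ℝ) T, ∀ y : ℝ, phi t < y → y ≤ phi t + ystar →
      c2 / (y - phi t) ^ gam ≤ b t y)
    (Y0 : ℝ) (hA1 : phi 0 < Y0)
    :
    ∃ L1 L2 L3 L4 : ℝ, 0 < L1 ∧ 0 < L2 ∧ 0 < L3 ∧ 0 < L4 ∧
      ∀ (Z : ℝ → ℝ) (Lam : ℝ), 0 < Lam → Z 0 = 0 →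
        (∀ s ∈ Set.Icc (0:ℝ) T, ∀ t ∈ Set.Icc (0:ℝ) T, |Z t - Z s| ≤ Lam * |t - s| ^ lam) →
        ∀ Y : ℝ → ℝ, ContinuousOn Y (Set.Icc (0:ℝ) T) →
          (∀ t ∈ Set.Icc (0:ℝ) T, phi t < Y t) →
          (∀ t ∈ Set.Icc (0:ℝ) T, Y t = Y0 + (∫ s in (0:ℝ)..t, b s (Y s)) + Z t) →
          ∀ t ∈ Set.Icc (0:ℝ) T,
            phi t + L1 / (L2 + Lam) ^ (1 / (gam * lam + lam - 1)) ≤ Y t ∧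
            Y t ≤ L3 + L4 * Lam := by
  obtain ⟨hlam0, hlam1⟩ := hlam
  have hθ : 0 < gam * lam + lam - 1 := by
    have := mul_lt_mul_of_pos_right hgam hlam0
    rw [sub_mul, one_div_mul_cancel hlam0.ne'] at this
    linarith
  obtain ⟨A, hA, hAY, hAy⟩ : ∃ A, 0 < A ∧ 2 * A ≤ Y0 - phi 0 ∧ 2 * A ≤ ystar :=
    ⟨min (Y0 - phi 0) ystar / 2, half_pos (lt_min (sub_pos.2 hA1) hystar),
      by linarith [min_le_left (Y0 - phi 0) ystar], by linarith [min_le_right (Y0 - phi 0) ystar]⟩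
  set L1 := min ((c2 ^ lam / 2 ^ (gam * lam)) ^ (1 / (gam * lam + lam - 1)))
    (A * K ^ (1 / (gam * lam + lam - 1)))
  set C := c1 / (1 / 2) ^ p
  have hL1 : 0 < L1 := lt_min (by positivity) (by positivity)
  refine ⟨L1, K, (|Y0| + |phi 0| + K * T ^ lam + 1 +
      (|b 0 (phi 0 + 1)| + C * (|phi 0| + 1 + T ^ lam)) / C) * exp (C * T),
    (2 * exp (C * T) + 1) * T ^ lam, hL1, hK, by positivity, by positivity, ?_⟩
  intro Z Lam hLam hZ0 hZH Y hYc hYphi hYeq t ht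
  have hg : ContinuousOn (fun u => b u (Y u)) (Icc 0 T) :=
    hA2cont.comp (continuousOn_id.prodMk hYc) fun u hu => ⟨hu, hYphi u hu⟩
  have hX : ContinuousOn (fun u => Y u - phi u) (Icc 0 T) :=
    hYc.sub (HolderOnIcc.continuousOn hphiH hlam0)
  have hinc := sub_eq_integral_add_sub hT.le hg hYeq
  have hY0 : Y 0 = Y0 := by simpa [hZ0] using hYeq 0 ⟨le_rfl, hT.le⟩
  exact ⟨phi_add_div_rpow_le hphiH hZH hX hg hinc hlam0.le hlam1.le hθ (by nlinarith) hc2.le hK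
      hLam.le hA.le hL1 (min_le_left _ _) (min_le_right _ _) (hY0 ▸ hAY) hYphi
      (fun u hu hXu => hA3 u hu (Y u) (hYphi u hu) (by linarith)) t ht,
    le_add_mul_of_lipschitz_above hT.le hlam0.le hK.le hLam.le (by positivity) (by norm_num)
      hphiH hZH hZ0 (hA2lip (1 / 2) (by norm_num) (by norm_num)) hX hg hinc hY0 t ht⟩

theorem stmt_3
    (T lam : ℝ) (hT : 0 < T) (hlam : lam ∈ Set.Ioo (0:ℝ) 1)
    (phi : ℝ → ℝ) (K : ℝ) (hK : 0 < K)
    (hphiH : ∀ s ∈ Set.Icc (0:ℝ) T, ∀ t ∈ Set.Icc (0:ℝ) T, |phi t - phi s| ≤ K * |t - s| ^ lam)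
    (b : ℝ → ℝ → ℝ) (c1 p c2 ystar gam : ℝ)
    (hc1 : 0 < c1) (hp : 1 < p) (hc2 : 0 < c2) (hystar : 0 < ystar)
    (hgam : 1 / lam - 1 < gam)
    (hA2cont : ContinuousOn (fun q : ℝ × ℝ => b q.1 q.2)
      {q : ℝ × ℝ | q.1 ∈ Set.Icc (0:ℝ) T ∧ phi q.1 < q.2})
    (hA2lip : ∀ ε : ℝ, 0 < ε → ε < 1 →
      ∀ t1 ∈ Set.Icc (0:ℝ) T, ∀ t2 ∈ Set.Icc (0:ℝ) T, ∀ y1 y2 : ℝ,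
        phi t1 + ε < y1 → phi t2 + ε < y2 →
        |b t1 y1 - b t2 y2| ≤ c1 / ε ^ p * (|y1 - y2| + |t1 - t2| ^ lam))
    (hA3 : ∀ t ∈ Set.Icc (0:ℝ) T, ∀ y : ℝ, phi t < y → y ≤ phi t + ystar →
      c2 / (y - phi t) ^ gam ≤ b t y)
    (Y0 : ℝ) (hA1 : phi 0 < Y0)
    :
    ∃ L1 L2 L3 L4 : ℝ, 0 < L1 ∧ 0 < L2 ∧ 0 < L3 ∧ 0 < L4 ∧
      ∀ (Z : ℝ → ℝ) (Lam : ℝ), 0 < Lam → Z 0 = 0 →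
        (∀ s ∈ Set.Icc (0:ℝ) T, ∀ t ∈ Set.Icc (0:ℝ) T, |Z t - Z s| ≤ Lam * |t - s| ^ lam) →
        ∀ Y : ℝ → ℝ, ContinuousOn Y (Set.Icc (0:ℝ) T) →
          (∀ t ∈ Set.Icc (0:ℝ) T, phi t < Y t) →
          (∀ t ∈ Set.Icc (0:ℝ) T, Y t = Y0 + (∫ s in (0:ℝ)..t, b s (Y s)) + Z t) →
          ∀ t ∈ Set.Icc (0:ℝ) T,
            phi t + L1 / (L2 + Lam) ^ (1 / (gam * lam + lam - 1)) ≤ Y t ∧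
            Y t ≤ L3 + L4 * Lam :=
  stmt_3_general T lam hT hlam phi K hK hphiH b c1 p c2 ystar gam hc1 hc2 hystar hgam hA2cont hA2lip
    hA3 Y0 hA1
end
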